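/- arXiv:1005.4033 — 3 statements merged into one kernel-verified Lean document; each statement's English description precedes it below -/
import Mathlib

section
/- Let x, y ∈ Σ^n be chosen independently and uniformly at random. Then the probability that lcs(x,y) ≥ 5n/√|Σ| is at most e^{-5n/√|Σ|}. -/
/-!
If `lcs x y ≥ k`, then `x` read along some `k`-element index set `S` equals `y` read along
some `k`-element index set `T`. For fixed `S`, `T` this event has probability `|Σ|⁻ᵏ`
(the values of `y` on `T` are forced), so a union bound over the `C(n,k)²` pairs gives
`P ≤ C(n,k)² |Σ|⁻ᵏ ≤ (e² n² / (k² |Σ|))ᵏ`. For `k = ⌈5n/√|Σ|⌉` the base is at most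
`e²/25 ≤ e⁻¹`.
-/

namespace EditDist

variable {α : Type*}

/-- `Chain R k x y` means `x` can be transformed into `y` by exactly `k` steps of `R`. -/
def Chain (R : List α → List α → Prop) : ℕ → List α → List α → Prop
  | 0, x, y => x = y
  | k+1, x, y => ∃ z, R x z ∧ Chain R k z y

/-- one character insertion -/
def InsStep (x y : List α) : Prop := ∃ (p s : List α) (a : α), x = p ++ s ∧ y = p ++ a :: s

/-- one character deletion -/
def DelStep (x y : List α) : Prop := InsStep y x

/-- one character substitution -/
def SubStep (x y : List α) : Prop := ∃ (p s : List α) (a b : α), x = p ++ a :: s ∧ y = p ++ b :: s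

/-- edit distance with insertions and deletions only -/
noncomputable def edd (x y : List α) : ℕ :=
  sInf {k | Chain (fun u v => InsStep u v ∨ DelStep u v) k x y}

/-- the usual edit distance: insertions, deletions and substitutions -/
noncomputable def ed (x y : List α) : ℕ :=
  sInf {k | Chain (fun u v => InsStep u v ∨ DelStep u v ∨ SubStep u v) k x y}

/-- length of a longest common subsequence -/
noncomputable def lcs (x y : List α) : ℕ :=
  sSup {k | ∃ z : List α, z.length = k ∧ z.Sublist x ∧ z.Sublist y}

end EditDist

open EditDist
open Finset

theorem List.exists_finset_sort_map_eq_of_sublist_ofFn {α : Type*} {n : ℕ} {f : Fin n → α}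
    {z : List α} (hz : z.Sublist (List.ofFn f)) :
    ∃ s : Finset (Fin n), s.card = z.length ∧ s.sort.map f = z := by
  rw [List.ofFn_eq_map, List.sublist_map_iff] at hz
  obtain ⟨l, hl, rfl⟩ := hz
  have hsorted : l.SortedLT := ((List.sortedLT_finRange n).pairwise.sublist hl).sortedLT
  refine ⟨l.toFinset, by simp [List.toFinset_card_of_nodup hsorted.nodup], ?_⟩
  rw [(sortedLT_sort _).eq_of_mem_iff hsorted (by simp)]

theorem card_filter_map_eq_map_sort_mul_pow_le {ι σ : Type*} [Fintype ι] [LinearOrder ι]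
    [Fintype σ] [DecidableEq σ] (l : List ι) (t : Finset ι) :
    #{p : (ι → σ) × (ι → σ) | l.map p.1 = t.sort.map p.2} * Fintype.card σ ^ #t ≤
      Fintype.card σ ^ Fintype.card ι * Fintype.card σ ^ Fintype.card ι := by
  have hinj : #{p : (ι → σ) × (ι → σ) | l.map p.1 = t.sort.map p.2} ≤
      Fintype.card ((ι → σ) × ({j // j ∉ t} → σ)) := by
    refine card_le_card_of_injOn (fun p => (p.1, fun j => p.2 j)) (by simp) ?_
    rintro ⟨x, y⟩ hp ⟨x', y'⟩ hp' heq
    obtain ⟨rfl, hy⟩ := Prod.mk.inj heq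
    have hyt : ∀ j ∈ t, y j = y' j := by
      simpa using (mem_filter.mp hp).2.symm.trans (mem_filter.mp hp').2
    refine Prod.ext rfl (funext fun j => ?_)
    by_cases hj : j ∈ t
    · exact hyt j hj
    · exact congrFun hy ⟨j, hj⟩
  calc _ ≤ Fintype.card σ ^ Fintype.card ι * Fintype.card σ ^ (Fintype.card ι - #t) *
        Fintype.card σ ^ #t := by
        gcongr
        simpa [Fintype.card_fun] using hinj
    _ = _ := by rw [mul_assoc, ← pow_add, Nat.sub_add_cancel (card_le_univ t)]

theorem Nat.choose_mul_pow_self_le_pow_mul_exp (n k : ℕ) :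
    (n.choose k : ℝ) * k ^ k ≤ n ^ k * Real.exp k :=
  calc (n.choose k : ℝ) * k ^ k ≤ n ^ k / k.factorial * k ^ k := by
        gcongr; exact Nat.choose_le_pow_div k n
    _ = n ^ k * (k ^ k / k.factorial) := by ring
    _ ≤ n ^ k * Real.exp k := by
        gcongr; exact Real.pow_div_factorial_le_exp _ (Nat.cast_nonneg k) k

theorem Nat.choose_sq_mul_exp_le_pow {n k : ℕ} {q : ℝ} (h : 25 * (n : ℝ) ^ 2 ≤ k ^ 2 * q) :
    (n.choose k : ℝ) ^ 2 * Real.exp k ≤ q ^ k := by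
  rcases k.eq_zero_or_pos with rfl | hk
  · simp
  have he : Real.exp 1 ^ 3 ≤ 25 :=
    calc Real.exp 1 ^ 3 ≤ 2.72 ^ 3 := by gcongr; linarith [Real.exp_one_lt_d9]
      _ ≤ 25 := by norm_num
  refine le_of_mul_le_mul_right ?_ (by positivity : (0 : ℝ) < k ^ (2 * k))
  calc (n.choose k : ℝ) ^ 2 * Real.exp k * k ^ (2 * k)
        = ((n.choose k : ℝ) * k ^ k) ^ 2 * Real.exp k := by ring
    _ ≤ (n ^ k * Real.exp k) ^ 2 * Real.exp k := by
        gcongr ?_ ^ 2 * _; exact Nat.choose_mul_pow_self_le_pow_mul_exp n k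
    _ = (n ^ 2 * Real.exp 1 ^ 3) ^ k := by rw [← Real.exp_one_pow]; ring
    _ ≤ (k ^ 2 * q) ^ k := by
        gcongr ?_ ^ k
        linarith [mul_le_mul_of_nonneg_left he (by positivity : (0 : ℝ) ≤ n ^ 2)]
    _ = q ^ k * k ^ (2 * k) := by ring

theorem sq_le_natCeil_div_sqrt_sq_mul {a q : ℝ} (ha : 0 ≤ a) (hq : 0 < q) :
    a ^ 2 ≤ ⌈a / Real.sqrt q⌉₊ ^ 2 * q := by
  have h : a ≤ ⌈a / Real.sqrt q⌉₊ * Real.sqrt q :=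
    (div_le_iff₀ (Real.sqrt_pos.2 hq)).mp (Nat.le_ceil _)
  calc a ^ 2 ≤ (⌈a / Real.sqrt q⌉₊ * Real.sqrt q) ^ 2 := pow_le_pow_left₀ ha h 2
    _ = ⌈a / Real.sqrt q⌉₊ ^ 2 * q := by rw [mul_pow, Real.sq_sqrt hq.le]

namespace EditDist

variable {α : Type*}

theorem exists_sublist_length_eq_lcs (x y : List α) :
    ∃ z : List α, z.length = lcs x y ∧ z.Sublist x ∧ z.Sublist y :=
  Nat.sSup_mem (s := {k | ∃ z : List α, z.length = k ∧ z.Sublist x ∧ z.Sublist y})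
    ⟨0, [], rfl, List.nil_sublist x, List.nil_sublist y⟩
    ⟨x.length, by rintro _ ⟨z, rfl, hzx, -⟩; exact hzx.length_le⟩

theorem exists_common_sublist_of_le_lcs {x y : List α} {k : ℕ} (hk : k ≤ lcs x y) :
    ∃ z : List α, z.length = k ∧ z.Sublist x ∧ z.Sublist y := by
  obtain ⟨z, hz, hzx, hzy⟩ := exists_sublist_length_eq_lcs x y
  exact ⟨z.take k, by simp [hz, hk], (z.take_sublist k).trans hzx, (z.take_sublist k).trans hzy⟩

theorem card_filter_le_lcs_ofFn_mul_pow_le {σ : Type*} [Fintype σ] (n k : ℕ) :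
    #{p : (Fin n → σ) × (Fin n → σ) | k ≤ lcs (List.ofFn p.1) (List.ofFn p.2)} *
        Fintype.card σ ^ k ≤
      n.choose k ^ 2 * (Fintype.card σ ^ n * Fintype.card σ ^ n) := by
  classical
  set S := powersetCard k (univ : Finset (Fin n)) ×ˢ powersetCard k (univ : Finset (Fin n))
  let E : Finset (Fin n) × Finset (Fin n) → Finset ((Fin n → σ) × (Fin n → σ)) :=
    fun st => {p | st.1.sort.map p.1 = st.2.sort.map p.2}
  have hcover : ∀ p : (Fin n → σ) × (Fin n → σ),
      k ≤ lcs (List.ofFn p.1) (List.ofFn p.2) → p ∈ S.biUnion E := by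
    intro p hp
    obtain ⟨z, rfl, hzx, hzy⟩ := exists_common_sublist_of_le_lcs hp
    obtain ⟨s, hs, hsz⟩ := List.exists_finset_sort_map_eq_of_sublist_ofFn hzx
    obtain ⟨t, ht, htz⟩ := List.exists_finset_sort_map_eq_of_sublist_ofFn hzy
    simp only [S, E, mem_biUnion, mem_product, mem_powersetCard_univ, mem_filter_univ]
    exact ⟨(s, t), ⟨hs, ht⟩, hsz.trans htz.symm⟩
  have hE : ∀ st ∈ S,
      #(E st) * Fintype.card σ ^ k ≤ Fintype.card σ ^ n * Fintype.card σ ^ n := by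
    intro st hst
    rw [← (mem_powersetCard_univ.mp (mem_product.mp hst).2)]
    simpa using card_filter_map_eq_map_sort_mul_pow_le (σ := σ) st.1.sort st.2
  calc _ ≤ #(S.biUnion E) * Fintype.card σ ^ k := by
        gcongr; exact fun p hp => hcover p (mem_filter.mp hp).2
    _ ≤ (∑ st ∈ S, #(E st)) * Fintype.card σ ^ k := by gcongr; exact card_biUnion_le
    _ ≤ ∑ _st ∈ S, Fintype.card σ ^ n * Fintype.card σ ^ n := by
        rw [sum_mul]; exact sum_le_sum hE
    _ = _ := by simp [S, sq]

end EditDist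

open scoped Classical in
theorem stmt3 {σ : Type*} [Fintype σ] (hσ : 2 ≤ Fintype.card σ) (n : ℕ) :
    ((Finset.univ.filter (fun p : (Fin n → σ) × (Fin n → σ) =>
        (5 * n / Real.sqrt (Fintype.card σ) : ℝ) ≤
          lcs (List.ofFn p.1) (List.ofFn p.2))).card : ℝ) /
        (Fintype.card ((Fin n → σ) × (Fin n → σ)) : ℝ) ≤
      Real.exp (-(5 * n / Real.sqrt (Fintype.card σ))) := by
  set q := Fintype.card σ
  set T : ℝ := 5 * n / Real.sqrt q
  set k := ⌈T⌉₊
  have hq : (0 : ℝ) < q := by exact_mod_cast (by omega : 0 < q)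
  have hk : 25 * (n : ℝ) ^ 2 ≤ k ^ 2 * q := by
    convert sq_le_natCeil_div_sqrt_sq_mul (by positivity : (0 : ℝ) ≤ 5 * n) hq using 1
    ring
  have hevent : #{p : (Fin n → σ) × (Fin n → σ) | T ≤ lcs (List.ofFn p.1) (List.ofFn p.2)} ≤
      #{p : (Fin n → σ) × (Fin n → σ) | k ≤ lcs (List.ofFn p.1) (List.ofFn p.2)} :=
    card_le_card fun p => by simp [k, Nat.ceil_le]
  have hcount := card_filter_le_lcs_ofFn_mul_pow_le (σ := σ) n k
  rw [Fintype.card_prod, Fintype.card_fun, Fintype.card_fin, Nat.cast_mul, Nat.cast_pow,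
    div_le_iff₀ (by positivity)]
  calc (#{p : (Fin n → σ) × (Fin n → σ) | T ≤ lcs (List.ofFn p.1) (List.ofFn p.2)} : ℝ)
      ≤ (n.choose k : ℝ) ^ 2 / q ^ k * (q ^ n * q ^ n) := by
        rw [div_mul_eq_mul_div, le_div_iff₀ (by positivity)]
        exact_mod_cast (Nat.mul_le_mul_right _ hevent).trans hcount
    _ ≤ Real.exp (-k) * (q ^ n * q ^ n) := by
        gcongr
        rw [Real.exp_neg, div_le_iff₀ (by positivity), inv_mul_eq_div,
          le_div_iff₀ (Real.exp_pos _)]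
        exact Nat.choose_sq_mul_exp_le_pow hk
    _ ≤ Real.exp (-T) * (q ^ n * q ^ n) := by
        gcongr
        exact Nat.le_ceil T
end

section
/- Let x,y ∈ Σ^n and B : Σ → (Σ')^{n'}, and let λ_B = max over distinct a,b ∈ Σ of lcs(B(a),B(b))/n'. Then n'·edd(x,y) - 8nn'·√λ_B ≤ edd(x ⊛ B, y ⊛ B) ≤ n'·edd(x,y). -/
open EditDist

/-- substitution product of a string with a block map: replace each character `a` by `B a`. -/
def sprod {σ σ' : Type*} {n : ℕ} (x : Fin n → σ) (B : σ → List σ') : List σ' :=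
  (List.ofFn x).flatMap B

/-! Since `edd u v + 2 * lcs u v = |u| + |v|`, both bounds are statements about `lcs`.
Substituting blockwise turns a common subsequence of `x`, `y` into one of `x ⊛ B`, `y ⊛ B`
that is `n'` times longer. Conversely, cutting an optimal common subsequence of two
concatenations after their leading blocks gives a recursion in which equal leading letters
contribute at most `n'` together with one common letter, and distinct ones at most
`lcs (B a) (B b) ≤ min λ 1 * n'` while dropping one letter. Hence
`lcs (x ⊛ B) (y ⊛ B) ≤ n' * lcs x y + 2n * min λ 1 * n'`, and `min λ 1 ≤ √λ`. -/

namespace EditDist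

variable {α : Type*}

lemma lcs_bddAbove (u v : List α) :
    BddAbove {k | ∃ z : List α, z.length = k ∧ z.Sublist u ∧ z.Sublist v} :=
  ⟨u.length, fun _ ⟨_, hz, hu, _⟩ => hz ▸ hu.length_le⟩

lemma le_lcs {z u v : List α} (hu : z.Sublist u) (hv : z.Sublist v) : z.length ≤ lcs u v :=
  le_csSup (lcs_bddAbove u v) ⟨z, rfl, hu, hv⟩

lemma exists_lcs (u v : List α) :
    ∃ z : List α, z.length = lcs u v ∧ z.Sublist u ∧ z.Sublist v :=
  Nat.sSup_mem (s := {k | ∃ z : List α, z.length = k ∧ z.Sublist u ∧ z.Sublist v})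
    ⟨0, [], rfl, List.nil_sublist _, List.nil_sublist _⟩ (lcs_bddAbove u v)

lemma lcs_comm (u v : List α) : lcs u v = lcs v u := by
  simp only [lcs, and_comm]

lemma lcs_le_length_left (u v : List α) : lcs u v ≤ u.length := by
  obtain ⟨z, hz, hu, -⟩ := exists_lcs u v
  exact hz ▸ hu.length_le

@[simp] lemma lcs_nil_left (v : List α) : lcs [] v = 0 :=
  Nat.le_zero.mp (lcs_le_length_left [] v)

lemma lcs_mono_left {w u v : List α} (h : w.Sublist u) : lcs w v ≤ lcs u v := by
  obtain ⟨z, hz, hw, hv⟩ := exists_lcs w v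
  exact hz ▸ le_lcs (hw.trans h) hv

lemma lcs_mono_right {u w v : List α} (h : w.Sublist v) : lcs u w ≤ lcs u v := by
  rw [lcs_comm u w, lcs_comm u v]
  exact lcs_mono_left h

lemma lcs_add_one_le_lcs_cons_cons (a : α) (u v : List α) :
    lcs u v + 1 ≤ lcs (a :: u) (a :: v) := by
  obtain ⟨z, hz, hu, hv⟩ := exists_lcs u v
  simpa [hz] using le_lcs (hu.cons_cons a) (hv.cons_cons a)

lemma lcs_append_cons_le (p s v : List α) (a : α) :
    lcs (p ++ a :: s) v ≤ lcs (p ++ s) v + 1 := by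
  obtain ⟨z, hz, hw, hv⟩ := exists_lcs (p ++ a :: s) v
  obtain ⟨z₁, z₂, rfl, h₁, h₂⟩ := List.sublist_append_iff.mp hw
  rcases List.sublist_cons_iff.mp h₂ with h₂ | ⟨r, rfl, hr⟩
  · have := le_lcs (h₁.append h₂) hv
    simp only [List.length_append] at this hz
    omega
  · have hsub : (z₁ ++ r).Sublist (z₁ ++ a :: r) :=
      (List.sublist_cons_self a r).append_left z₁
    have := le_lcs (h₁.append hr) (hsub.trans hv)
    simp only [List.length_append, List.length_cons] at this hz
    omega

lemma length_le_of_sublist_append_of_overlap {z₁ t w A X C Y : List α}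
    (hA : z₁.Sublist A) (hX : (t ++ w).Sublist X) (hC : (z₁ ++ t).Sublist C)
    (hY : w.Sublist Y) :
    (z₁ ++ (t ++ w)).length ≤ C.length + lcs X Y ∧
      (z₁ ++ (t ++ w)).length ≤ lcs A C + lcs X (C ++ Y) := by
  have hw : w.length ≤ lcs X Y := le_lcs ((List.sublist_append_right t w).trans hX) hY
  have hz₁ : z₁.length ≤ lcs A C := le_lcs hA ((List.sublist_append_left z₁ t).trans hC)
  have htw : (t ++ w).length ≤ lcs X (C ++ Y) :=
    le_lcs hX (((List.sublist_append_right z₁ t).trans hC).append hY)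
  have hC' := hC.length_le
  simp only [List.length_append] at *
  omega

/-- Cut an optimal common subsequence along both concatenations; of its parts in `A` and in `C`,
the shorter is a prefix of the longer. -/
lemma lcs_append_append_le (A X C Y : List α) :
    lcs (A ++ X) (C ++ Y) ≤ max A.length C.length + lcs X Y ∧
      lcs (A ++ X) (C ++ Y) ≤ lcs A C + max (lcs X (C ++ Y)) (lcs (A ++ X) Y) := by
  obtain ⟨z, hz, hAX, hCY⟩ := exists_lcs (A ++ X) (C ++ Y)
  obtain ⟨z₁, z₂, rfl, hA, hX⟩ := List.sublist_append_iff.mp hAX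
  obtain ⟨w₁, w₂, hzw, hC, hY⟩ := List.sublist_append_iff.mp hCY
  rw [← hz]
  rcases List.append_eq_append_iff.mp hzw with ⟨t, rfl, rfl⟩ | ⟨t, rfl, rfl⟩
  · obtain ⟨h₁, h₂⟩ := length_le_of_sublist_append_of_overlap hA hX hC hY
    exact ⟨h₁.trans (by omega), h₂.trans (by omega)⟩
  · obtain ⟨h₁, h₂⟩ := length_le_of_sublist_append_of_overlap hC hY hA hX
    rw [← List.append_assoc] at h₁ h₂
    rw [lcs_comm Y X, lcs_comm C A, lcs_comm Y] at *
    exact ⟨h₁.trans (by omega), h₂.trans (by omega)⟩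

section Chains

variable {R : List α → List α → Prop}

lemma Chain.trans {k m : ℕ} {x y w : List α} (h : Chain R k x y) (h' : Chain R m y w) :
    Chain R (k + m) x w := by
  induction k generalizing x with
  | zero => rwa [show x = y from h, Nat.zero_add]
  | succ k ih =>
    obtain ⟨z, hz, hc⟩ := h
    rw [Nat.succ_add]
    exact ⟨z, hz, ih hc⟩

lemma Chain.snoc {k : ℕ} {x y w : List α} (h : Chain R k x y) (h' : R y w) :
    Chain R (k + 1) x w :=
  h.trans (m := 1) ⟨w, h', rfl⟩

lemma Chain.symm (hR : ∀ u v, R u v → R v u) {k : ℕ} {x y : List α} (h : Chain R k x y) :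
    Chain R k y x := by
  induction k generalizing x with
  | zero => exact (show x = y from h) ▸ rfl
  | succ k ih =>
    obtain ⟨z, hz, hc⟩ := h
    exact (ih hc).snoc (hR _ _ hz)

end Chains

abbrev IndelStep (u v : List α) : Prop := InsStep u v ∨ DelStep u v

lemma IndelStep.symm {u v : List α} (h : IndelStep u v) : IndelStep v u :=
  Or.symm h

lemma IndelStep.cons (a : α) {u v : List α} (h : IndelStep u v) :
    IndelStep (a :: u) (a :: v) := by
  rcases h with ⟨p, s, b, rfl, rfl⟩ | ⟨p, s, b, rfl, rfl⟩
  · exact Or.inl ⟨a :: p, s, b, rfl, rfl⟩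
  · exact Or.inr ⟨a :: p, s, b, rfl, rfl⟩

lemma Chain.indel_cons (a : α) {k : ℕ} {u v : List α} (h : Chain IndelStep k u v) :
    Chain IndelStep k (a :: u) (a :: v) := by
  induction k generalizing u with
  | zero => rw [show u = v from h]; rfl
  | succ k ih =>
    obtain ⟨z, hz, hc⟩ := h
    exact ⟨a :: z, hz.cons a, ih hc⟩

lemma chain_indel_of_sublist {z u : List α} (h : z.Sublist u) :
    Chain IndelStep (u.length - z.length) u z := by
  induction h with
  | slnil => rfl
  | @cons l₁ l₂ a h ih =>
    rw [List.length_cons, Nat.sub_add_comm h.length_le]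
    exact ⟨l₂, Or.inr ⟨[], l₂, a, rfl, rfl⟩, ih⟩
  | @cons_cons l₁ l₂ a h ih =>
    simpa using ih.indel_cons a

lemma chain_indel_of_sublists {z u v : List α} (hu : z.Sublist u) (hv : z.Sublist v) :
    Chain IndelStep (u.length + v.length - 2 * z.length) u v := by
  have h := (chain_indel_of_sublist hu).trans
    ((chain_indel_of_sublist hv).symm fun _ _ => IndelStep.symm)
  have := hu.length_le
  have := hv.length_le
  rwa [show u.length - z.length + (v.length - z.length) = u.length + v.length - 2 * z.length
    by omega] at h

lemma length_add_length_le_of_chain {k : ℕ} {u v : List α} (h : Chain IndelStep k u v) :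
    u.length + v.length ≤ k + 2 * lcs u v := by
  induction k generalizing u with
  | zero =>
    rw [show u = v from h]
    have := le_lcs (List.Sublist.refl v) (List.Sublist.refl v)
    omega
  | succ k ih =>
    obtain ⟨w, hw, hc⟩ := h
    have := ih hc
    rcases hw with ⟨p, s, a, rfl, rfl⟩ | ⟨p, s, a, rfl, rfl⟩
    · have := lcs_append_cons_le p s v a
      simp only [List.length_append, List.length_cons] at *
      omega
    · have := lcs_mono_left (v := v) ((List.sublist_cons_self a s).append_left p)
      simp only [List.length_append, List.length_cons] at *
      omega

theorem edd_add_two_mul_lcs (u v : List α) : edd u v + 2 * lcs u v = u.length + v.length := by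
  obtain ⟨z, hz, hu, hv⟩ := exists_lcs u v
  have hle : edd u v ≤ u.length + v.length - 2 * z.length :=
    Nat.sInf_le (chain_indel_of_sublists hu hv)
  have hchain : edd u v ∈ {k | Chain IndelStep k u v} :=
    Nat.sInf_mem ⟨_, chain_indel_of_sublists hu hv⟩
  have hge := length_add_length_le_of_chain hchain
  have := hu.length_le
  have := hv.length_le
  omega

end EditDist

lemma min_one_le_sqrt {x : ℝ} (hx : 0 ≤ x) : min x 1 ≤ √x :=
  Real.le_sqrt_of_sq_le (by nlinarith [min_le_left x 1, min_le_right x 1, le_min hx zero_le_one])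

section SubstitutionProduct

variable {σ β : Type*} {B : σ → List β} {n' : ℕ}

lemma mul_lcs_le_lcs_flatMap (hB : ∀ a, (B a).length = n') (xs ys : List σ) :
    n' * lcs xs ys ≤ lcs (xs.flatMap B) (ys.flatMap B) := by
  obtain ⟨z, hz, hx, hy⟩ := exists_lcs xs ys
  simpa [List.length_flatMap, hB, hz, mul_comm] using le_lcs (hx.flatMap B) (hy.flatMap B)

/-- Along `lcs_append_append_le`, equal leading blocks cost at most `n'` and are paid for by a
common letter of `xs` and `ys`; distinct leading blocks cost at most `c` and drop a letter. -/
lemma lcs_flatMap_le (hB : ∀ a, (B a).length ≤ n') {c : ℝ} (hc : 0 ≤ c)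
    (hBc : ∀ a b, a ≠ b → (lcs (B a) (B b) : ℝ) ≤ c) (xs ys : List σ) :
    (lcs (xs.flatMap B) (ys.flatMap B) : ℝ) ≤
      n' * lcs xs ys + (xs.length + ys.length) * c := by
  induction xs generalizing ys with
  | nil =>
    simp only [List.flatMap_nil, lcs_nil_left, Nat.cast_zero, mul_zero, zero_add]
    positivity
  | cons a xs ihx =>
    induction ys with
    | nil =>
      rw [lcs_comm, lcs_comm (a :: xs)]
      simp only [List.flatMap_nil, lcs_nil_left, Nat.cast_zero, mul_zero, zero_add]
      positivity
    | cons b ys ihy =>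
      obtain ⟨hsame, hdiff⟩ := lcs_append_append_le (B a) (xs.flatMap B) (B b) (ys.flatMap B)
      simp only [← List.flatMap_cons] at hsame hdiff
      simp only [List.length_cons, Nat.cast_add, Nat.cast_one]
      by_cases hab : a = b
      · subst hab
        have hmax : max (B a).length (B a).length ≤ n' := by simpa using hB a
        have hcons := lcs_add_one_le_lcs_cons_cons a xs ys
        have := ihx ys
        have h1 : (lcs ((a :: xs).flatMap B) ((a :: ys).flatMap B) : ℝ) ≤
            n' + lcs (xs.flatMap B) (ys.flatMap B) := by exact_mod_cast hsame.trans (by omega)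
        have h2 : (n' : ℝ) * (lcs xs ys + 1) ≤ n' * lcs (a :: xs) (a :: ys) := by
          exact_mod_cast Nat.mul_le_mul_left n' hcons
        nlinarith
      · have hx := ihx (b :: ys)
        simp only [List.length_cons, Nat.cast_add, Nat.cast_one] at hx ihy
        have hmx : (lcs xs (b :: ys) : ℝ) ≤ lcs (a :: xs) (b :: ys) := by
          exact_mod_cast lcs_mono_left (List.sublist_cons_self a xs)
        have hmy : (lcs (a :: xs) ys : ℝ) ≤ lcs (a :: xs) (b :: ys) := by
          exact_mod_cast lcs_mono_right (List.sublist_cons_self b ys)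
        have hrest : (max (lcs (xs.flatMap B) ((b :: ys).flatMap B))
            (lcs ((a :: xs).flatMap B) (ys.flatMap B)) : ℝ) ≤
              n' * lcs (a :: xs) (b :: ys) + (xs.length + ys.length + 1) * c := by
          apply max_le <;> nlinarith [Nat.cast_nonneg (α := ℝ) n']
        have hd : (lcs ((a :: xs).flatMap B) ((b :: ys).flatMap B) : ℝ) ≤
            lcs (B a) (B b) + max (lcs (xs.flatMap B) ((b :: ys).flatMap B) : ℝ)
              (lcs ((a :: xs).flatMap B) (ys.flatMap B)) := by exact_mod_cast hdiff
        linarith [hBc a b hab]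

/-- Since `lcs (B a) (B b) ≤ n'` anyway, `lam` may be capped at `1`, and `min lam 1 ≤ √lam`. -/
lemma lcs_flatMap_le_sqrt (hB : ∀ a, (B a).length = n') {lam : ℝ} (hlam0 : 0 ≤ lam)
    (hlam : ∀ a b, a ≠ b → (lcs (B a) (B b) : ℝ) ≤ lam * n') (xs ys : List σ) :
    (lcs (xs.flatMap B) (ys.flatMap B) : ℝ) ≤
      n' * lcs xs ys + (xs.length + ys.length) * n' * √lam := by
  have hBc (a b : σ) (hab : a ≠ b) : (lcs (B a) (B b) : ℝ) ≤ min lam 1 * n' := by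
    rw [min_mul_of_nonneg _ _ (Nat.cast_nonneg n'), one_mul]
    exact le_min (hlam a b hab) (by exact_mod_cast hB a ▸ lcs_le_length_left (B a) (B b))
  have hcap := mul_le_mul_of_nonneg_left (min_one_le_sqrt hlam0)
    (by positivity : (0 : ℝ) ≤ (xs.length + ys.length) * n')
  have := lcs_flatMap_le (fun a => (hB a).le) (by positivity) hBc xs ys
  linarith

end SubstitutionProduct

theorem stmt5 {σ σ' : Type*} {n n' : ℕ} (x y : Fin n → σ)
    (B : σ → List σ') (hB : ∀ a, (B a).length = n')
    (lam : ℝ) (hlam0 : 0 ≤ lam)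
    (hlam : ∀ a b : σ, a ≠ b → (lcs (B a) (B b) : ℝ) ≤ lam * n') :
    (n' : ℝ) * edd (List.ofFn x) (List.ofFn y) - 8 * n * n' * Real.sqrt lam ≤
        (edd (sprod x B) (sprod y B) : ℝ) ∧
      edd (sprod x B) (sprod y B) ≤ n' * edd (List.ofFn x) (List.ofFn y) := by
  have hlen (z : Fin n → σ) : (sprod z B).length = n * n' := by
    simp [sprod, List.length_flatMap, hB, Function.comp_def]
  have hE : (edd (List.ofFn x) (List.ofFn y) : ℝ) + 2 * lcs (List.ofFn x) (List.ofFn y) =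
      n + n := by
    exact_mod_cast (by simpa using edd_add_two_mul_lcs (List.ofFn x) (List.ofFn y))
  have hEB : (edd (sprod x B) (sprod y B) : ℝ) + 2 * lcs (sprod x B) (sprod y B) =
      n * n' + n * n' := by
    exact_mod_cast (by simpa [hlen] using edd_add_two_mul_lcs (sprod x B) (sprod y B))
  have hlower : (n' : ℝ) * lcs (List.ofFn x) (List.ofFn y) ≤ lcs (sprod x B) (sprod y B) := by
    exact_mod_cast mul_lcs_le_lcs_flatMap hB (List.ofFn x) (List.ofFn y)
  have hupper : (lcs (sprod x B) (sprod y B) : ℝ) ≤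
      n' * lcs (List.ofFn x) (List.ofFn y) + (n + n) * n' * √lam := by
    simpa only [sprod, List.length_ofFn] using
      lcs_flatMap_le_sqrt hB hlam0 hlam (List.ofFn x) (List.ofFn y)
  have hscaled := congrArg ((n' : ℝ) * ·) hE
  simp only [mul_add] at hscaled
  constructor
  · have : (0 : ℝ) ≤ n * n' * √lam := by positivity
    linarith
  · exact_mod_cast (by linarith : (edd (sprod x B) (sprod y B) : ℝ) ≤
      n' * edd (List.ofFn x) (List.ofFn y))
end

section
/- The E-distance from x to y equals the minimum over all vectors Z = (z_{i,s}) with z_{0,1} = 1 of cost(Z) + ∑_{s∈[n]} Ham(x[s], y[z_{h,s}]), where cost(Z) = ∑_{i=0}^{h-1} ∑_{s∈B_i} ∑_{j=0}^{b-1} |z_{i,s} + j·l_{i+1} - z_{i+1, s + j·l_{i+1}}| and Ham(x[s], y[u]) is 1 if u ∉ [n] or x[s] ≠ y[u], and 0 otherwise. -/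
open EditDist

open scoped Classical

/-- The `E`-distance from the paper (0-indexed).  `Edist x y n b k s u` is the `E`-distance of the
substring of `x` of length `b ^ k` starting at position `s` to position `u` of `y` (a string of
length `n`); `k` is the height of the node in the `b`-ary tree, i.e. `k = h - i` for level `i`.
At the leaves it is the Hamming-type cost; at an internal node it is the sum over the `b`
children of the minimum over integer shifts `r` of (child distance at the shifted position)
plus `|r|`. -/
noncomputable def Edist {α : Type*} (x y : ℕ → α) (n b : ℕ) : ℕ → ℕ → ℤ → ℝ
  | 0, s, u => if 0 ≤ u ∧ u < (n : ℤ) ∧ x s = y u.toNat then 0 else 1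
  | k + 1, s, u =>
      ∑ j ∈ Finset.range b,
        ⨅ r : ℤ, (Edist x y n b k (s + j * b ^ k) (u + (j : ℤ) * (b : ℤ) ^ k + r) + |(r : ℝ)|)

/-- the cost of a matching vector `Z`: the sum, over all internal nodes of the `b`-ary tree of
height `h` and all their children, of the displacement between the child's matched position and
the position it would get from its parent.  The level-`i` blocks start at the positions
`t * b ^ (h - i)` for `t < b ^ i`, and `l_{i+1} = b ^ (h - i - 1)`. -/
noncomputable def Zcost (b h : ℕ) (Z : ℕ → ℕ → ℤ) : ℝ :=
  ∑ i ∈ Finset.range h, ∑ t ∈ Finset.range (b ^ i), ∑ j ∈ Finset.range b,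
    |((Z i (t * b ^ (h - i)) + (j : ℤ) * (b : ℤ) ^ (h - i - 1)
        - Z (i + 1) (t * b ^ (h - i) + j * b ^ (h - i - 1)) : ℤ) : ℝ)|

/-- the Hamming term: each leaf `s` pays 1 unless its matched position `Z h s` is a valid
position of `y` carrying the same character as `x s`. -/
noncomputable def Zham {α : Type*} (x y : ℕ → α) (b h : ℕ) (Z : ℕ → ℕ → ℤ) : ℝ :=
  ∑ s ∈ Finset.range (b ^ h),
    if 0 ≤ Z h s ∧ Z h s < (b ^ h : ℤ) ∧ x s = y (Z h s).toNat then 0 else 1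

/-!
Both sides obey the same recursion in the height of the tree. A matching vector of a node is its
root value `u` together with independent matching vectors `W j` of the `b` subtrees, and its cost
is the sum over the children of the displacement `|r_j|` of the `j`-th child's root from
`u + j·l` plus the cost of `W j`. Minimising over the `W j` independently turns the infimum of
that sum into the sum of the children's infima, which is the defining recursion of `E`.
-/

theorem Finset.sum_range_mul_eq_sum_sum {M : Type*} [AddCommMonoid M] (f : ℕ → M) (a m : ℕ) :
    ∑ t ∈ range (a * m), f t = ∑ j ∈ range a, ∑ t ∈ range m, f (j * m + t) := by
  induction a with
  | zero => simp
  | succ a ih => rw [Nat.succ_mul, sum_range_add, ih, sum_range_succ]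

theorem Finset.le_sum_ciInf {ι : Type*} {κ : ι → Type*} [∀ i, Nonempty (κ i)] {α : Type*}
    [AddCommGroup α] [ConditionallyCompleteLattice α] [IsOrderedAddMonoid α]
    (s : Finset ι) {f : (i : ι) → κ i → α} {a : α}
    (H : ∀ g : (i : ι) → κ i, a ≤ ∑ i ∈ s, f i (g i)) :
    a ≤ ∑ i ∈ s, ⨅ k, f i k := by
  induction s using Finset.induction_on generalizing a with
  | empty => simpa using H fun _ => Classical.arbitrary _
  | insert i s hi ih =>
    rw [sum_insert hi]
    refine le_ciInf_add fun k => sub_le_iff_le_add'.mp <| ih fun g => ?_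
    have hg := H (Function.update g i k)
    rw [sum_insert hi, Function.update_self,
      sum_congr rfl fun j hj => by rw [Function.update_of_ne (ne_of_mem_of_not_mem hj hi)]] at hg
    exact sub_le_iff_le_add'.mpr hg

section Matching

variable {α : Type*} (x y : ℕ → α) (n b : ℕ)

-- `Zham` with the length `n` of `y` decoupled from the height `k`, so that it applies to subtrees
noncomputable def ZhamLen (k : ℕ) (Z : ℕ → ℕ → ℤ) : ℝ :=
  ∑ s ∈ Finset.range (b ^ k),
    if 0 ≤ Z k s ∧ Z k s < (n : ℤ) ∧ x s = y (Z k s).toNat then 0 else 1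

noncomputable def Zobj (k : ℕ) (Z : ℕ → ℕ → ℤ) : ℝ :=
  Zcost b k Z + ZhamLen x y n b k Z

def Zchild (k j : ℕ) (Z : ℕ → ℕ → ℤ) : ℕ → ℕ → ℤ :=
  fun i t => Z (i + 1) (j * b ^ k + t)

def Zglue (k : ℕ) (u : ℤ) (W : ℕ → ℕ → ℕ → ℤ) : ℕ → ℕ → ℤ :=
  fun i m => if i = 0 then u else W (m / b ^ k) (i - 1) (m % b ^ k)

theorem Zchild_Zglue {k j i t : ℕ} (u : ℤ) (W : ℕ → ℕ → ℕ → ℤ) (ht : t < b ^ k) :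
    Zchild b k j (Zglue b k u W) i t = W j i t := by
  have hpos : 0 < b ^ k := by omega
  simp only [Zchild, Zglue, Nat.add_eq_zero_iff, one_ne_zero, and_false, if_false,
    Nat.add_sub_cancel, mul_comm j, Nat.mul_add_div hpos, Nat.div_eq_of_lt ht, add_zero,
    Nat.mul_add_mod, Nat.mod_eq_of_lt ht]

theorem Zcost_succ (k : ℕ) (Z : ℕ → ℕ → ℤ) :
    Zcost b (k + 1) Z = ∑ j ∈ Finset.range b,
      (|((Z 0 0 + (j : ℤ) * (b : ℤ) ^ k - Z 1 (j * b ^ k) : ℤ) : ℝ)|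
        + Zcost b k (Zchild b k j Z)) := by
  rw [Finset.sum_add_distrib]
  unfold Zcost
  rw [Finset.sum_range_succ', add_comm, Finset.sum_comm (s := Finset.range b)]
  congr 1
  · simp
  refine Finset.sum_congr rfl fun i hi => ?_
  have hpow : b ^ i * b ^ (k - i) = b ^ k := by
    rw [← pow_add, Nat.add_sub_cancel' (Finset.mem_range.mp hi).le]
  rw [Nat.succ_sub_succ, pow_succ', Finset.sum_range_mul_eq_sum_sum]
  refine Finset.sum_congr rfl fun j _ => Finset.sum_congr rfl fun t _ => ?_
  simp only [Zchild, add_mul, mul_assoc, hpow, add_assoc]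

theorem ZhamLen_succ (k : ℕ) (Z : ℕ → ℕ → ℤ) :
    ZhamLen x y n b (k + 1) Z = ∑ j ∈ Finset.range b,
      ZhamLen (fun t => x (j * b ^ k + t)) y n b k (Zchild b k j Z) := by
  rw [ZhamLen, pow_succ', Finset.sum_range_mul_eq_sum_sum]
  rfl

theorem Zobj_zero (Z : ℕ → ℕ → ℤ) :
    Zobj x y n b 0 Z =
      if 0 ≤ Z 0 0 ∧ Z 0 0 < (n : ℤ) ∧ x 0 = y (Z 0 0).toNat then 0 else 1 := by
  simp [Zobj, Zcost, ZhamLen]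

theorem Zobj_succ (k : ℕ) (Z : ℕ → ℕ → ℤ) :
    Zobj x y n b (k + 1) Z = ∑ j ∈ Finset.range b,
      (|((Z 0 0 + (j : ℤ) * (b : ℤ) ^ k - Z 1 (j * b ^ k) : ℤ) : ℝ)|
        + Zobj (fun t => x (j * b ^ k + t)) y n b k (Zchild b k j Z)) := by
  simp only [Zobj, Zcost_succ, ZhamLen_succ, ← Finset.sum_add_distrib, add_assoc]

theorem Zobj_nonneg (k : ℕ) (Z : ℕ → ℕ → ℤ) : 0 ≤ Zobj x y n b k Z := by
  unfold Zobj Zcost ZhamLen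
  refine add_nonneg (Finset.sum_nonneg fun _ _ => Finset.sum_nonneg fun _ _ =>
    Finset.sum_nonneg fun _ _ => abs_nonneg _) (Finset.sum_nonneg fun _ _ => ?_)
  split_ifs <;> norm_num

theorem bddBelow_range_Zobj {ι : Sort*} (k : ℕ) (Z : ι → ℕ → ℕ → ℤ) :
    BddBelow (Set.range fun i => Zobj x y n b k (Z i)) :=
  ⟨0, by rintro _ ⟨i, rfl⟩; exact Zobj_nonneg x y n b k (Z i)⟩

variable {x y n b} in
theorem Zobj_congr {k : ℕ} {Z Z' : ℕ → ℕ → ℤ}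
    (h : ∀ i ≤ k, ∀ t < b ^ k, Z i t = Z' i t) :
    Zobj x y n b k Z = Zobj x y n b k Z' := by
  induction k generalizing x Z Z' with
  | zero => rw [Zobj_zero, Zobj_zero, h 0 le_rfl 0 (by simp)]
  | succ k ih =>
    rw [Zobj_succ, Zobj_succ]
    refine Finset.sum_congr rfl fun j hj => ?_
    have hchild : ∀ t < b ^ k, j * b ^ k + t < b ^ (k + 1) := fun t ht => by
      have := Nat.add_mul_lt_mul_of_lt_of_lt ht (Finset.mem_range.mp hj)
      rw [pow_succ]
      linarith
    have hb : 0 < b := by have := Finset.mem_range.mp hj; omega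
    rw [h 0 (by omega) 0 (pow_pos hb _), h 1 (by omega) _ (by simpa using hchild 0 (pow_pos hb _)),
      ih (Z := Zchild b k j Z) (Z' := Zchild b k j Z') fun i _ t ht =>
        h (i + 1) (by omega) _ (hchild t ht)]

theorem Zobj_Zglue (k : ℕ) (u : ℤ) (W : ℕ → ℕ → ℕ → ℤ) :
    Zobj x y n b (k + 1) (Zglue b k u W) = ∑ j ∈ Finset.range b,
      (|((W j 0 0 - (u + (j : ℤ) * (b : ℤ) ^ k) : ℤ) : ℝ)|
        + Zobj (fun t => x (j * b ^ k + t)) y n b k (W j)) := by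
  rw [Zobj_succ]
  refine Finset.sum_congr rfl fun j hj => ?_
  have hb : 0 < b := by have := Finset.mem_range.mp hj; omega
  have hroot : Zglue b k u W 1 (j * b ^ k) = W j 0 0 := by
    simpa [Zchild] using Zchild_Zglue b u W (j := j) (i := 0) (pow_pos hb k)
  rw [show Zglue b k u W 0 0 = u from rfl, hroot,
    Zobj_congr (Z' := W j) fun i _ t ht => Zchild_Zglue b u W ht,
    ← Int.cast_abs, ← Int.cast_abs, abs_sub_comm]

end Matching

instance (u : ℤ) : Nonempty {Z : ℕ → ℕ → ℤ // Z 0 0 = u} :=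
  ⟨⟨fun _ _ => u, rfl⟩⟩

section Edist

variable {α : Type*} (x y : ℕ → α) (n b : ℕ)

theorem Edist_nonneg (k s : ℕ) (u : ℤ) : 0 ≤ Edist x y n b k s u := by
  induction k generalizing s u with
  | zero => rw [Edist]; positivity
  | succ k ih =>
    rw [Edist]
    exact Finset.sum_nonneg fun j _ => le_ciInf fun r => add_nonneg (ih _ _) (abs_nonneg _)

theorem Edist_le_Zobj (k s : ℕ) (Z : ℕ → ℕ → ℤ) :
    Edist x y n b k s (Z 0 0) ≤ Zobj (fun t => x (s + t)) y n b k Z := by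
  induction k generalizing s Z with
  | zero => simp [Edist, Zobj_zero]
  | succ k ih =>
    rw [Edist, Zobj_succ]
    refine Finset.sum_le_sum fun j _ => ?_
    have hbdd : BddBelow (Set.range fun r : ℤ =>
        Edist x y n b k (s + j * b ^ k) (Z 0 0 + j * b ^ k + r) + |(r : ℝ)|) :=
      ⟨0, by rintro _ ⟨r, rfl⟩; exact add_nonneg (Edist_nonneg ..) (abs_nonneg _)⟩
    obtain ⟨r, hr⟩ : ∃ r : ℤ, Z 1 (j * b ^ k) = Z 0 0 + j * b ^ k + r :=
      ⟨_, (add_sub_cancel _ _).symm⟩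
    have hchild := ih (s + j * b ^ k) (Zchild b k j Z)
    rw [show Zchild b k j Z 0 0 = Z 1 (j * b ^ k) from rfl, hr] at hchild
    calc _ ≤ Edist x y n b k (s + j * b ^ k) (Z 0 0 + j * b ^ k + r) + |(r : ℝ)| :=
          ciInf_le hbdd r
      _ ≤ _ := by
        rw [hr, sub_add_cancel_left, Int.cast_neg, abs_neg, add_comm]
        simpa only [add_assoc] using add_le_add_right hchild _

theorem iInf_Zobj_le_Edist (k s : ℕ) (u : ℤ) :
    ⨅ Z : {Z : ℕ → ℕ → ℤ // Z 0 0 = u}, Zobj (fun t => x (s + t)) y n b k Z ≤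
      Edist x y n b k s u := by
  induction k generalizing s u with
  | zero =>
    exact ciInf_le_of_le (bddBelow_range_Zobj ..) ⟨fun _ _ => u, rfl⟩
      (by simp [Edist, Zobj_zero])
  | succ k ih =>
    rw [Edist]
    refine Finset.le_sum_ciInf _ fun r => ?_
    calc _ ≤ ∑ j ∈ Finset.range b,
          ⨅ W : {W : ℕ → ℕ → ℤ // W 0 0 = u + j * b ^ k + r j},
            (Zobj (fun t => x (s + j * b ^ k + t)) y n b k W + |(r j : ℝ)|) := by
          refine Finset.le_sum_ciInf _ fun W => ciInf_le_of_le (bddBelow_range_Zobj ..)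
            ⟨Zglue b k u fun j => (W j).1, rfl⟩ (le_of_eq ?_)
          rw [Zobj_Zglue]
          refine Finset.sum_congr rfl fun j _ => ?_
          rw [(W j).2, add_comm]
          simp [add_assoc]
      _ = ∑ j ∈ Finset.range b,
          ((⨅ W : {W : ℕ → ℕ → ℤ // W 0 0 = u + j * b ^ k + r j},
            Zobj (fun t => x (s + j * b ^ k + t)) y n b k W) + |(r j : ℝ)|) :=
        Finset.sum_congr rfl fun j _ => (ciInf_add (bddBelow_range_Zobj ..) _).symm
      _ ≤ _ := Finset.sum_le_sum fun j _ => add_le_add_left (ih _ _) _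

theorem Edist_eq_iInf_Zobj (k s : ℕ) (u : ℤ) :
    Edist x y n b k s u =
      ⨅ Z : {Z : ℕ → ℕ → ℤ // Z 0 0 = u}, Zobj (fun t => x (s + t)) y n b k Z :=
  le_antisymm (le_ciInf fun ⟨Z, hZ⟩ => hZ ▸ Edist_le_Zobj x y n b k s Z)
    (iInf_Zobj_le_Edist x y n b k s u)

end Edist

theorem stmt15_general {α : Type*} (b h : ℕ) (x y : ℕ → α) :
    Edist x y (b ^ h) b h 0 0 =
      ⨅ Z : {Z : ℕ → ℕ → ℤ // Z 0 0 = 0}, (Zcost b h Z.1 + Zham x y b h Z.1) := by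
  rw [Edist_eq_iInf_Zobj]
  refine iInf_congr fun Z => ?_
  simp [Zobj, Zham, ZhamLen]

theorem stmt15 {α : Type*} (b h : ℕ) (hb : 2 ≤ b) (x y : ℕ → α) :
    Edist x y (b ^ h) b h 0 0 =
      ⨅ Z : {Z : ℕ → ℕ → ℤ // Z 0 0 = 0}, (Zcost b h Z.1 + Zham x y b h Z.1) :=
  stmt15_general b h x y
end
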